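/- arXiv:2309.07151 — 2 statements merged into one kernel-verified Lean document; each statement's English description precedes it below -/
import Mathlib

section
/- If M is an abelian group with a divisible underlying group, then for any ring R, the R-module Hom_ℤ(R, M) of additive maps from R to M, with R acting by (r·f)(x) = f(xr), is an injective R-module. -/
/-- The `R`-module structure on the additive maps `R →+ M` given by `(r • f) x = f (x * r)`. -/
def homModule (R : Type*) [Ring R] (M : Type*) [AddCommGroup M] : Module R (R →+ M) where
  smul r f := f.comp (AddMonoidHom.mulRight r)
  one_smul f := AddMonoidHom.ext fun x => by show f (x * 1) = f x; rw [mul_one]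
  mul_smul r s f := AddMonoidHom.ext fun x => by
    show f (x * (r * s)) = f (x * r * s); rw [mul_assoc]
  smul_zero r := AddMonoidHom.ext fun _ => rfl
  smul_add r f g := AddMonoidHom.ext fun _ => rfl
  add_smul r s f := AddMonoidHom.ext fun x => by
    show f (x * (r + s)) = f (x * r) + f (x * s); rw [mul_add, map_add]
  zero_smul f := AddMonoidHom.ext fun x => by show f (x * 0) = 0; rw [mul_zero, map_zero]

/-!
`Hom_ℤ(R, -)` is right adjoint to the forgetful functor from `R`-modules to abelian groups:
an `R`-linear map `Y → Hom_ℤ(R, Q)` is the same as an additive map `Y → Q`, via evaluation at `1`.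
A right adjoint of an exact functor preserves injectives, and divisible groups are injective
`ℤ`-modules by Baer's criterion.
-/

theorem Module.Baer.int_of_forall_exists_zsmul_eq {Q : Type*} [AddCommGroup Q]
    (hdiv : ∀ (d : Q) (n : ℤ), n ≠ 0 → ∃ e : Q, n • e = d) : Module.Baer ℤ Q :=
  letI := AddCommGroup.divisibleByIntOfSMulTopEqTop Q fun {n} hn =>
    AddSubgroup.map_top_of_surjective (zsmulAddGroupHom n) fun d => hdiv d n hn
  Module.Baer.of_divisible Q

section HomModule

attribute [local instance] homModule

variable {R : Type*} [Ring R] {Q : Type*} [AddCommGroup Q]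

@[simp]
theorem homModule_smul_apply (r : R) (f : R →+ Q) (x : R) : (r • f) x = f (x * r) := rfl

def homModuleLift {Y : Type*} [AddCommGroup Y] [Module R Y] (ψ : Y →+ Q) :
    Y →ₗ[R] (R →+ Q) where
  toFun y := ψ.comp ((smulAddHom R Y).flip y)
  map_add' y z := AddMonoidHom.ext fun r => by simp
  map_smul' r y := AddMonoidHom.ext fun x => by simp [mul_smul]

@[simp]
theorem homModuleLift_apply {Y : Type*} [AddCommGroup Y] [Module R Y] (ψ : Y →+ Q) (y : Y)
    (r : R) : homModuleLift ψ y r = ψ (r • y) := rfl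

theorem LinearMap.homModule_apply_eq_apply_smul_one {X : Type*} [AddCommGroup X] [Module R X]
    (g : X →ₗ[R] (R →+ Q)) (x : X) (r : R) : g x r = g (r • x) 1 := by
  rw [g.map_smul, homModule_smul_apply, one_mul]

theorem Module.Baer.injective_homModule (hQ : Module.Baer ℤ Q) :
    Module.Injective R (R →+ Q) where
  out X Y _ _ _ _ f hf g := by
    obtain ⟨ψ, hψ⟩ := hQ.extension_property_addMonoidHom f.toAddMonoidHom hf
      ((AddMonoidHom.eval 1).comp g.toAddMonoidHom)
    refine ⟨homModuleLift ψ, fun x => AddMonoidHom.ext fun r => ?_⟩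
    calc ψ (r • f x) = ψ (f (r • x)) := by rw [f.map_smul]
      _ = g (r • x) 1 := DFunLike.congr_fun hψ (r • x)
      _ = g x r := (g.homModule_apply_eq_apply_smul_one x r).symm

end HomModule

theorem hom_from_divisible_injective (R : Type*) [Ring R]
    (M : Type*) [AddCommGroup M]
    (hdiv : ∀ (d : M) (n : ℤ), n ≠ 0 → ∃ e : M, n • e = d) :
    letI := homModule R M
    Module.Injective R (R →+ M) :=
  (Module.Baer.int_of_forall_exists_zsmul_eq hdiv).injective_homModule
end

section
/- If a functor G : A → B has a right adjoint F : B → A, G is exact (or left exact as needed), the unit of the adjunction is monic, and every object of B embeds in an injective object of B, then every object of A embeds in an injective object of A. -/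
open CategoryTheory

theorem enough_injectives_of_adjunction {A B : Type*} [Category A] [Category B]
    [Abelian A] [Abelian B] (G : A ⥤ B) (F : B ⥤ A) (adj : G ⊣ F)
    [Limits.PreservesFiniteLimits G]
    (hmono : ∀ X : A, Mono (adj.unit.app X))
    [EnoughInjectives B] :
    EnoughInjectives A := by
  have : G.PreservesMonomorphisms := inferInstance
  have : F.PreservesMonomorphisms := by have := adj.rightAdjoint_preservesLimits; infer_instance
  constructor
  intro X
  refine ⟨⟨F.obj (Injective.under (G.obj X)),
    Injective.injective_of_adjoint adj _,
    adj.unit.app X ≫ F.map (Injective.ι (G.obj X)), ?_⟩⟩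
  have := hmono X
  exact mono_comp _ _
end
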